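/- arXiv:1612.05931 — 6 statements merged into one kernel-verified Lean document; each statement's English description precedes it below -/
import Mathlib

section
/- Let q be a prime power, n a positive integer and 0 ≤ k ≤ n. There exists a k-normal element of F_{q^n} over F_q if and only if x^n − 1 has a monic divisor of degree n−k in F_q[x]. -/
open Polynomial

/-- For `f = Σ aᵢ xⁱ ∈ F_q[x]` and `α ∈ F_{qⁿ}`, `qmap f α = Σ aᵢ α^(qⁱ)` (the action of
the `q`-associate linearized polynomial of `f` on `α`, i.e. `f ∘ α`). -/
noncomputable def qmap {Fq Fqn : Type*} [Field Fq] [Fintype Fq] [Field Fqn] [Algebra Fq Fqn]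
    (f : Polynomial Fq) (α : Fqn) : Fqn :=
  f.sum fun i a => a • α ^ (Fintype.card Fq) ^ i

/-- The `F_q`-subspace of `F_{qⁿ}` spanned by `α, α^q, …, α^(q^(n-1))`. -/
noncomputable def conjSpan (Fq : Type*) {Fqn : Type*} [Field Fq] [Fintype Fq] [Field Fqn]
    [Algebra Fq Fqn] (n : ℕ) (α : Fqn) : Submodule Fq Fqn :=
  Submodule.span Fq ((fun i : ℕ => α ^ (Fintype.card Fq) ^ i) '' Set.Iio n)

/-! Let `F_q[X]` act on `F_{qⁿ}` with `X` acting as the Frobenius `φ : x ↦ x ^ q`, whose minimal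
polynomial is `Xⁿ - 1`. Then `V_α` is the cyclic submodule `F_q[X] • α ≅ F_q[X] ⧸ (h_α)`, where
`h_α ∣ Xⁿ - 1` is the monic generator of the annihilator of `α`, so `dim V_α = deg h_α`.
Conversely, by the structure theorem over the PID `F_q[X]` some `α` has annihilator `(Xⁿ - 1)`;
if `Xⁿ - 1 = h * g`, then `g • α` has annihilator `(h)`. -/

theorem Ideal.torsionOf_smul_eq_span_singleton {R M : Type*} [CommRing R] [IsDomain R]
    [AddCommGroup M] [Module R M] {x : M} {a b : R}
    (hx : torsionOf R M x = span {a * b}) (hb : b ≠ 0) :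
    torsionOf R M (b • x) = span {a} := by
  ext r
  rw [mem_torsionOf_iff, smul_smul, ← mem_torsionOf_iff, hx, mem_span_singleton,
    mem_span_singleton, mul_dvd_mul_iff_right hb]

theorem Function.Periodic.image_Iio_eq_range {α : Type*} {g : ℕ → α} {n : ℕ}
    (hg : Function.Periodic g n) (hn : 0 < n) : g '' Set.Iio n = Set.range g := by
  refine (Set.image_subset_range _ _).antisymm ?_
  rintro _ ⟨i, rfl⟩
  exact ⟨i % n, Nat.mod_lt i hn, hg.map_mod_nat i⟩

namespace Module.AEval'

variable {K M : Type*} [Field K] [AddCommGroup M] [Module K M]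

theorem restrictScalars_span_singleton_of (f : Module.End K M) (x : M) :
    (Submodule.span K[X] {of f x}).restrictScalars K =
      (Submodule.span K (Set.range fun i : ℕ => (f ^ i) x)).map
        (of f : M →ₗ[K] AEval' f) := by
  rw [← Submodule.span_smul_of_span_eq_top (basisMonomials K).span_eq, Submodule.map_span,
    Set.smul_singleton, ← Set.range_comp, ← Set.range_comp]
  congr 2
  ext i
  simp [monomial_one_right_eq_X_pow, X_pow_smul_of]

theorem finrank_span_range_pow_apply_eq_natDegree (f : Module.End K M) (x : M) {h : K[X]}
    (hx : Ideal.torsionOf K[X] (AEval' f) (of f x) = Ideal.span {h}) :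
    finrank K (Submodule.span K (Set.range fun i : ℕ => (f ^ i) x)) = h.natDegree := by
  rw [← (of f).finrank_map_eq, ← restrictScalars_span_singleton_of,
    ← finrank_quotient_span_eq_natDegree, ← hx]
  exact ((Ideal.quotTorsionOfEquivSpanSingleton K[X] _ (of f x)).restrictScalars K).finrank_eq.symm

variable [FiniteDimensional K M]

theorem exists_monic_dvd_minpoly_and_torsionOf_eq_span (f : Module.End K M) (x : M) :
    ∃ h : K[X], h.Monic ∧ h ∣ minpoly K f ∧
      Ideal.torsionOf K[X] (AEval' f) (of f x) = Ideal.span {h} := by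
  classical
  obtain ⟨g, hg⟩ :=
    (IsPrincipalIdealRing.principal (Ideal.torsionOf K[X] (AEval' f) (of f x))).principal
  rw [Ideal.submodule_span_eq] at hg
  have hmin : minpoly K f ∈ Ideal.torsionOf K[X] (AEval' f) (of f x) :=
    mem_annihilator.mp ((span_minpoly_eq_annihilator K f).le (Ideal.mem_span_singleton_self _)) _
  have hg0 : g ≠ 0 := by
    rintro rfl
    rw [hg, Ideal.span_singleton_eq_bot.mpr rfl, Ideal.mem_bot] at hmin
    exact minpoly.ne_zero_of_finite K f hmin
  refine ⟨normalize g, monic_normalize hg0, ?_, ?_⟩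
  · rw [hg, Ideal.mem_span_singleton] at hmin
    exact (normalize_associated g).dvd.trans hmin
  · rw [hg, Ideal.span_singleton_eq_span_singleton]
    exact (normalize_associated g).symm

theorem exists_torsionOf_eq_span_of_dvd_minpoly (f : Module.End K M) {h : K[X]}
    (hh : h ∣ minpoly K f) :
    ∃ x : M, Ideal.torsionOf K[X] (AEval' f) (of f x) = Ideal.span {h} := by
  obtain ⟨g, hg⟩ := hh
  obtain ⟨y, hy⟩ := exists_ker_toSpanSingleton_eq_annihilator K[X] (AEval' f)
  refine ⟨(of f).symm (g • y), ?_⟩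
  rw [LinearEquiv.apply_symm_apply]
  refine Ideal.torsionOf_smul_eq_span_singleton ?_ ?_
  · rw [← hg]
    exact hy.trans (span_minpoly_eq_annihilator K f).symm
  · rintro rfl
    exact minpoly.ne_zero_of_finite K f (by rw [hg, mul_zero])

end Module.AEval'

section Frobenius

open FiniteField

variable (Fq : Type*) {Fqn : Type*} [Field Fq] [Fintype Fq] [Field Fqn] [Algebra Fq Fqn]

theorem FiniteField.frobeniusAlgHom_toLinearMap_pow_apply (i : ℕ) (α : Fqn) :
    ((frobeniusAlgHom Fq Fqn).toLinearMap ^ i) α = α ^ Fintype.card Fq ^ i := by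
  rw [Module.End.pow_apply, AlgHom.coe_toLinearMap, coe_frobeniusAlgHom, pow_iterate]

theorem conjSpan_finrank_eq_span_range [Fintype Fqn] (α : Fqn) :
    conjSpan Fq (Module.finrank Fq Fqn) α =
      Submodule.span Fq
        (Set.range fun i : ℕ => ((frobeniusAlgHom Fq Fqn).toLinearMap ^ i) α) := by
  have hperiodic :
      Function.Periodic (fun i : ℕ => α ^ Fintype.card Fq ^ i) (Module.finrank Fq Fqn) := by
    intro i
    simp only [pow_add, pow_mul, ← Module.card_eq_pow_finrank, pow_card]
  simp only [conjSpan, frobeniusAlgHom_toLinearMap_pow_apply,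
    hperiodic.image_Iio_eq_range Module.finrank_pos]

end Frobenius

theorem stmt_6_general (Fq Fqn : Type*) [Field Fq] [Fintype Fq] [Field Fqn] [Fintype Fqn]
    [Algebra Fq Fqn] (n : ℕ) (hdeg : Module.finrank Fq Fqn = n)
    (k : ℕ) :
    (∃ α : Fqn, Module.finrank Fq (conjSpan Fq n α) = n - k) ↔
      ∃ h : Polynomial Fq, h.Monic ∧ h ∣ (X ^ n - 1 : Polynomial Fq) ∧
        h.natDegree = n - k := by
  subst hdeg
  rw [← FiniteField.minpoly_frobeniusAlgHom]
  set φ := (FiniteField.frobeniusAlgHom Fq Fqn).toLinearMap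
  constructor
  · rintro ⟨α, hα⟩
    obtain ⟨h, hmonic, hdvd, htors⟩ :=
      Module.AEval'.exists_monic_dvd_minpoly_and_torsionOf_eq_span φ α
    refine ⟨h, hmonic, hdvd, ?_⟩
    rwa [conjSpan_finrank_eq_span_range,
      Module.AEval'.finrank_span_range_pow_apply_eq_natDegree φ α htors] at hα
  · rintro ⟨h, -, hdvd, hdegree⟩
    obtain ⟨α, htors⟩ := Module.AEval'.exists_torsionOf_eq_span_of_dvd_minpoly φ hdvd
    refine ⟨α, ?_⟩
    rwa [conjSpan_finrank_eq_span_range,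
      Module.AEval'.finrank_span_range_pow_apply_eq_natDegree φ α htors]

/-- Let `F_{qⁿ}/F_q` be an extension of finite fields of degree `n ≥ 1` and `0 ≤ k ≤ n`.
There exists a `k`-normal element of `F_{qⁿ}` over `F_q` if and only if `xⁿ - 1` has a
monic divisor of degree `n - k` in `F_q[x]`. -/
theorem stmt_6 (Fq Fqn : Type*) [Field Fq] [Fintype Fq] [Field Fqn] [Fintype Fqn]
    [Algebra Fq Fqn] (n : ℕ) (hn : 0 < n) (hdeg : Module.finrank Fq Fqn = n)
    (k : ℕ) (hk : k ≤ n) :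
    (∃ α : Fqn, Module.finrank Fq (conjSpan Fq n α) = n - k) ↔
      ∃ h : Polynomial Fq, h.Monic ∧ h ∣ (X ^ n - 1 : Polynomial Fq) ∧
        h.natDegree = n - k :=
  stmt_6_general Fq Fqn n hdeg k
end

section
/- Let q be a prime power with q ≡ 3 (mod 4). Then every 2-normal element β of F_{q^4} over F_q satisfies β^{q^2} = β or β^{q^2} = −β, hence β^{2(q^2−1)} = 1 and the multiplicative order of β is at most 2(q^2−1). In particular, no 2-normal element of F_{q^4} over F_q is primitive. -/
open Polynomial

/-!
The Frobenius `φ : x ↦ x ^ q` is an `F_q`-linear map of `F_{q⁴}` with `φ⁴ = 1`. If `β` is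
2-normal, then `β, φ β` is a basis of the span of the conjugates of `β`, so
`φ² β = a β + b φ β`. Expanding `φ⁴ β = β` in this basis gives `(a + b²) a = 1` and
`b (2a + b²) = 0`; if `b ≠ 0` then `a² = -1`, impossible since `-1` is not a square in `F_q`
for `q ≡ 3 (mod 4)`. Hence `b = 0` and `a = ±1`, that is `β ^ q² = ±β`, so
`β ^ (q² - 1) = ±1`.
-/

namespace Module.End

variable {K V : Type*} [Field K] [AddCommGroup V] [Module K V]

def krylovSpan (f : Module.End K V) (n : ℕ) (v : V) : Submodule K V :=
  Submodule.span K ((fun i => (f ^ i) v) '' Set.Iio n)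

theorem pow_apply_mem_krylovSpan (f : Module.End K V) {n i : ℕ} (hi : i < n) (v : V) :
    (f ^ i) v ∈ krylovSpan f n v :=
  Submodule.subset_span ⟨i, hi, rfl⟩

theorem linearIndependent_pair_of_two_le_finrank_krylovSpan (f : Module.End K V) (v : V)
    {n : ℕ} (h : 2 ≤ Module.finrank K (krylovSpan f n v)) :
    LinearIndependent K ![v, f v] := by
  by_contra hdep
  have hfv : f v ∈ K ∙ v := by
    by_cases hv : v = 0
    · simp [hv]
    · obtain ⟨a, ha⟩ := not_forall_not.mp ((LinearIndependent.pair_iff' hv).not.mp hdep)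
      exact Submodule.mem_span_singleton.mpr ⟨a, ha⟩
  have hinv : ∀ x ∈ K ∙ v, f x ∈ K ∙ v := by
    intro x hx
    obtain ⟨c, rfl⟩ := Submodule.mem_span_singleton.mp hx
    rw [map_smul]
    exact Submodule.smul_mem _ c hfv
  have hle : krylovSpan f n v ≤ K ∙ v := by
    refine Submodule.span_le.mpr ?_
    rintro _ ⟨i, -, rfl⟩
    exact pow_apply_mem_of_forall_mem i hinv v (Submodule.mem_span_singleton_self v)
  have := (Submodule.finrank_mono hle).trans (finrank_span_le_card {v})
  rw [Set.toFinset_singleton, Finset.card_singleton] at this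
  omega

theorem pow_two_apply_mem_span_pair_of_finrank_krylovSpan_eq_two (f : Module.End K V) (v : V)
    {n : ℕ} (hn : 3 ≤ n) (h : Module.finrank K (krylovSpan f n v) = 2) :
    (f ^ 2) v ∈ Submodule.span K {v, f v} := by
  have hle : Submodule.span K {v, f v} ≤ krylovSpan f n v := by
    rw [Submodule.span_le, Set.insert_subset_iff, Set.singleton_subset_iff]
    exact ⟨by simpa using pow_apply_mem_krylovSpan f (i := 0) (by omega) v,
      by simpa using pow_apply_mem_krylovSpan f (i := 1) (by omega) v⟩
  have : Module.Finite K (krylovSpan f n v) := Module.finite_of_finrank_eq_succ h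
  have hrank : Module.finrank K (Submodule.span K {v, f v}) = 2 := by
    rw [← Matrix.range_cons_cons_empty v (f v) ![],
      finrank_span_eq_card (linearIndependent_pair_of_two_le_finrank_krylovSpan f v h.ge),
      Fintype.card_fin]
  rw [Submodule.eq_of_le_of_finrank_le hle (by rw [h, hrank])]
  exact pow_apply_mem_krylovSpan f (by omega) v

end Module.End

-- The coordinates of `f⁴ v = v` in the basis `v, f v` when `f² v = a v + b f v`.
theorem eq_zero_and_mul_self_eq_one_of_not_isSquare_neg_one {K : Type*} [Field K] {a b : K}
    (hK : ¬IsSquare (-1 : K)) (h₁ : (a + b * b) * a = 1) (h₂ : b * a + (a + b * b) * b = 0) :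
    b = 0 ∧ a * a = 1 := by
  by_cases hb : b = 0
  · subst hb
    exact ⟨rfl, by linear_combination h₁⟩
  · have h2a : 2 * a + b * b = 0 :=
      (mul_eq_zero.mp (by linear_combination h₂ : b * (2 * a + b * b) = 0)).resolve_left hb
    exact absurd ⟨a, by linear_combination h₁ - a * h2a⟩ hK

theorem Module.End.pow_two_apply_eq_or_eq_neg_of_pow_four_apply {K V : Type*} [Field K]
    [AddCommGroup V] [Module K V] (f : Module.End K V) (v : V) (hK : ¬IsSquare (-1 : K))
    (hli : LinearIndependent K ![v, f v]) (hmem : (f ^ 2) v ∈ Submodule.span K {v, f v})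
    (h4 : (f ^ 4) v = v) :
    (f ^ 2) v = v ∨ (f ^ 2) v = -v := by
  obtain ⟨a, b, hab⟩ := Submodule.mem_span_pair.mp hmem
  have hf2 : f (f v) = a • v + b • f v := by rw [hab, sq, mul_apply]
  have hf4 : (f ^ 4) v = ((a + b * b) * a) • v + (b * a + (a + b * b) * b) • f v := by
    simp only [pow_succ, pow_zero, one_mul, mul_apply, hf2, map_add, map_smul]
    module
  have hcoef := LinearIndependent.pair_iff.mp hli ((a + b * b) * a - 1) (b * a + (a + b * b) * b)
    (by rw [sub_smul, one_smul, sub_add_eq_add_sub, ← hf4, h4, sub_self])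
  obtain ⟨rfl, ha⟩ := eq_zero_and_mul_self_eq_one_of_not_isSquare_neg_one hK
    (sub_eq_zero.mp hcoef.1) hcoef.2
  rw [← hab, zero_smul, add_zero]
  rcases mul_self_eq_one_iff.mp ha with rfl | rfl
  · exact .inl (one_smul K v)
  · exact .inr (neg_one_smul K v)

@[simp]
theorem FiniteField.frobeniusAlgHom_toLinearMap_pow_apply_s12 (K L : Type*) [Field K] [Fintype K]
    [Field L] [Algebra K L] (i : ℕ) (x : L) :
    ((frobeniusAlgHom K L).toLinearMap ^ i) x = x ^ Fintype.card K ^ i := by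
  rw [Module.End.pow_apply, AlgHom.coe_toLinearMap, coe_frobeniusAlgHom, pow_iterate]

theorem conjSpan_eq_krylovSpan_frobeniusAlgHom (Fq : Type*) {Fqn : Type*} [Field Fq]
    [Fintype Fq] [Field Fqn] [Algebra Fq Fqn] (n : ℕ) (α : Fqn) :
    conjSpan Fq n α =
      Module.End.krylovSpan (FiniteField.frobeniusAlgHom Fq Fqn).toLinearMap n α := by
  simp only [conjSpan, Module.End.krylovSpan, FiniteField.frobeniusAlgHom_toLinearMap_pow_apply_s12]

theorem pow_two_mul_pred_eq_one_of_pow_eq_or_eq_neg {R : Type*} [CommRing R] [IsDomain R]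
    {x : R} (hx : x ≠ 0) {m : ℕ} (h : x ^ m = x ∨ x ^ m = -x) : x ^ (2 * (m - 1)) = 1 := by
  cases m with
  | zero => simp
  | succ k =>
    have hk : x ^ k = 1 ∨ x ^ k = -1 := by
      rw [pow_succ] at h
      refine h.imp (fun h => mul_right_cancel₀ hx ?_) (fun h => mul_right_cancel₀ hx ?_) <;>
        simpa using h
    rw [Nat.add_sub_cancel, mul_comm, pow_mul]
    rcases hk with hk | hk <;> simp [hk]

theorem Nat.two_mul_sq_sub_one_lt_pow_four_sub_one {q : ℕ} (hq : 2 ≤ q) :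
    2 * (q ^ 2 - 1) < q ^ 4 - 1 := by
  have h1 : 1 ≤ q ^ 2 := Nat.one_le_pow _ _ (by omega)
  have h2 : 1 ≤ q ^ 4 := Nat.one_le_pow _ _ (by omega)
  zify [h1, h2]
  have h4 : (4 : ℤ) ≤ (q : ℤ) ^ 2 := by nlinarith
  nlinarith

/-- Let `q ≡ 3 (mod 4)` be a prime power and `F_{q⁴}/F_q` an extension of finite fields
of degree `4`.  Then every `2`-normal element `β` of `F_{q⁴}` over `F_q` satisfies
`β^(q²) = β` or `β^(q²) = -β`, hence `β^(2(q²-1)) = 1` and the multiplicative order of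
`β` is at most `2(q²-1)`; in particular `β` is not primitive. -/
theorem stmt_12 (Fq Fqn : Type*) [Field Fq] [Fintype Fq] [Field Fqn] [Fintype Fqn]
    [Algebra Fq Fqn] (q : ℕ) (hq : q = Fintype.card Fq) (hq3 : q % 4 = 3)
    (hdeg : Module.finrank Fq Fqn = 4) :
    ∀ β : Fqn, Module.finrank Fq (conjSpan Fq 4 β) = 2 →
      (β ^ q ^ 2 = β ∨ β ^ q ^ 2 = -β) ∧
      β ^ (2 * (q ^ 2 - 1)) = 1 ∧
      orderOf β ≤ 2 * (q ^ 2 - 1) ∧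
      orderOf β ≠ q ^ 4 - 1 := by
  intro β hβ
  set φ := (FiniteField.frobeniusAlgHom Fq Fqn).toLinearMap
  rw [conjSpan_eq_krylovSpan_frobeniusAlgHom] at hβ
  have hli := Module.End.linearIndependent_pair_of_two_le_finrank_krylovSpan φ β hβ.ge
  have hφ4 : (φ ^ 4) β = β := by
    rw [FiniteField.frobeniusAlgHom_toLinearMap_pow_apply_s12, ← hdeg,
      ← Module.card_eq_pow_finrank, FiniteField.pow_card]
  have hK : ¬IsSquare (-1 : Fq) := by rw [FiniteField.isSquare_neg_one_iff, ← hq]; omega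
  have hconj : β ^ q ^ 2 = β ∨ β ^ q ^ 2 = -β := by
    simpa only [φ, FiniteField.frobeniusAlgHom_toLinearMap_pow_apply_s12, ← hq] using
      Module.End.pow_two_apply_eq_or_eq_neg_of_pow_four_apply φ β hK hli
        (Module.End.pow_two_apply_mem_span_pair_of_finrank_krylovSpan_eq_two φ β
          (by norm_num) hβ) hφ4
  have hpow := pow_two_mul_pred_eq_one_of_pow_eq_or_eq_neg (hli.ne_zero 0) hconj
  have hord : orderOf β ≤ 2 * (q ^ 2 - 1) := orderOf_le_of_pow_eq_one
    (Nat.mul_pos two_pos (Nat.sub_pos_of_lt (Nat.one_lt_pow two_ne_zero (by omega)))) hpow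
  exact ⟨hconj, hpow, hord,
    (hord.trans_lt (Nat.two_mul_sq_sub_one_lt_pow_four_sub_one (by omega))).ne⟩
end

section
/- Let q be a prime power, n a positive integer and 0 ≤ k ≤ n. If x^n − 1 has a monic divisor of degree n−k in F_q[x], then the number N_k of k-normal elements of F_{q^n} over F_q satisfies N_k ≥ (q−1)^{n−k}. -/
/-!
Let `φ : x ↦ x^q` be the Frobenius, an `F_q`-linear endomorphism of `F_{qⁿ}` with minimal
polynomial `Xⁿ - 1`. The span of the conjugates of `α` is the cyclic `F_q[X]`-submodule generated
by `α`, so its dimension is the degree of the `φ`-order of `α` (the generator of its annihilator).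

For `f ∣ Xⁿ - 1` the kernel of `f(φ)` has dimension exactly `deg f`: at most `deg f` because it
consists of roots of the `q`-polynomial `Σ aᵢ X^(qⁱ)`, and at least `deg f` by rank–nullity applied
to the cofactor. Hence the elements of order `pᵉ` (`p` irreducible of degree `d`) are
`ker pᵉ(φ) \ ker pᵉ⁻¹(φ)`, of which there are `q^(de) - q^(d(e-1)) ≥ (q-1)^(de)`; and
`(β, γ) ↦ β + γ` injects pairs of elements of coprime orders `f`, `g` into the elements of order
`fg`. So at least `(q-1)^(deg h)` elements have order `h`, and each of them is `k`-normal.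
-/

open Polynomial

open FiniteField Module

section Order

variable {K V : Type*} [Field K] [AddCommGroup V] [Module K V] (φ : Module.End K V)

/-- The vectors of `φ`-order `f`, the paper's `F_q`-order `Ord(v)`, which is determined here
only up to a unit of `K[X]`. -/
def elementsOfOrder (f : K[X]) : Set V :=
  {v | ∀ g : K[X], aeval φ g v = 0 ↔ f ∣ g}

variable {φ}

lemma aeval_apply_eq_zero_of_dvd {f g : K[X]} {v : V} (hfg : f ∣ g) (hv : aeval φ f v = 0) :
    aeval φ g v = 0 := by
  obtain ⟨c, rfl⟩ := hfg
  rw [mul_comm, map_mul, Module.End.mul_apply, hv, map_zero]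

lemma aeval_apply_eq_zero_of_mem {f : K[X]} {v : V} (hv : v ∈ elementsOfOrder φ f) :
    aeval φ f v = 0 :=
  (hv f).2 dvd_rfl

lemma eq_zero_of_isCoprime {f g : K[X]} (hfg : IsCoprime f g) {v : V}
    (hf : aeval φ f v = 0) (hg : aeval φ g v = 0) : v = 0 := by
  obtain ⟨a, b, hab⟩ := hfg
  have h := congr(aeval φ $hab v)
  rwa [map_one, Module.End.one_apply, map_add, LinearMap.add_apply,
    aeval_apply_eq_zero_of_dvd (dvd_mul_left f a) hf,
    aeval_apply_eq_zero_of_dvd (dvd_mul_left g b) hg, add_zero, eq_comm] at h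

lemma elementsOfOrder_of_isUnit {f : K[X]} (hf : IsUnit f) : elementsOfOrder φ f = {0} := by
  ext v
  simp only [elementsOfOrder, Set.mem_ofPred_eq, Set.mem_singleton_iff, hf.dvd, iff_true]
  exact ⟨fun h => by simpa using h 1, fun hv g => by simp [hv]⟩

lemma elementsOfOrder_pow_succ {p : K[X]} (hp : Prime p) (e : ℕ) :
    elementsOfOrder φ (p ^ (e + 1)) =
      (LinearMap.ker (aeval φ (p ^ (e + 1))) : Set V) \ LinearMap.ker (aeval φ (p ^ e)) := by
  ext v
  simp only [elementsOfOrder, Set.mem_ofPred_eq, Set.mem_sdiff, SetLike.mem_coe, LinearMap.mem_ker]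
  constructor
  · intro hv
    refine ⟨aeval_apply_eq_zero_of_mem hv, fun hpe => ?_⟩
    have := (pow_dvd_pow_iff hp.ne_zero hp.not_isUnit).mp ((hv _).1 hpe)
    omega
  · rintro ⟨hsucc, hpe⟩ g
    refine ⟨fun hg => ?_, fun hdvd => aeval_apply_eq_zero_of_dvd hdvd hsucc⟩
    classical
    have hgcd : aeval φ (EuclideanDomain.gcd g (p ^ (e + 1))) v = 0 := by
      rw [EuclideanDomain.gcd_eq_gcd_ab, map_add, LinearMap.add_apply,
        aeval_apply_eq_zero_of_dvd (dvd_mul_right _ _) hg,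
        aeval_apply_eq_zero_of_dvd (dvd_mul_right _ _) hsucc, add_zero]
    obtain ⟨i, hi, hassoc⟩ :=
      (dvd_prime_pow hp _).mp (EuclideanDomain.gcd_dvd_right g (p ^ (e + 1)))
    obtain rfl | hlt := hi.eq_or_lt
    · exact hassoc.symm.dvd.trans (EuclideanDomain.gcd_dvd_left g _)
    · exact absurd (aeval_apply_eq_zero_of_dvd
        (hassoc.dvd.trans (pow_dvd_pow p (Nat.le_of_lt_succ hlt))) hgcd) hpe

lemma dvd_of_aeval_add_eq_zero {f g c : K[X]} (hfg : IsCoprime f g) {β γ : V}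
    (hβ : β ∈ elementsOfOrder φ f) (hγ : aeval φ g γ = 0) (h : aeval φ c (β + γ) = 0) :
    f ∣ c := by
  have hcg := aeval_apply_eq_zero_of_dvd (dvd_mul_right c g) h
  rw [map_add, aeval_apply_eq_zero_of_dvd (dvd_mul_left g c) hγ, add_zero] at hcg
  exact hfg.dvd_of_dvd_mul_right ((hβ _).1 hcg)

lemma add_mem_elementsOfOrder_mul {f g : K[X]} (hfg : IsCoprime f g) {β γ : V}
    (hβ : β ∈ elementsOfOrder φ f) (hγ : γ ∈ elementsOfOrder φ g) :
    β + γ ∈ elementsOfOrder φ (f * g) := by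
  have hfβ := aeval_apply_eq_zero_of_mem hβ
  have hgγ := aeval_apply_eq_zero_of_mem hγ
  refine fun c => ⟨fun h => hfg.mul_dvd (dvd_of_aeval_add_eq_zero hfg hβ hgγ h)
    (dvd_of_aeval_add_eq_zero hfg.symm hγ hfβ (by rwa [add_comm])), fun h => ?_⟩
  rw [map_add, aeval_apply_eq_zero_of_dvd ((dvd_mul_right f g).trans h) hfβ,
    aeval_apply_eq_zero_of_dvd ((dvd_mul_left g f).trans h) hgγ, add_zero]

lemma ncard_elementsOfOrder_mul_le [Finite V] {f g : K[X]} (hfg : IsCoprime f g) :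
    (elementsOfOrder φ f).ncard * (elementsOfOrder φ g).ncard ≤
      (elementsOfOrder φ (f * g)).ncard := by
  rw [← Set.ncard_prod]
  refine Set.ncard_le_ncard_of_injOn (fun x => x.1 + x.2)
    (fun x hx => add_mem_elementsOfOrder_mul hfg hx.1 hx.2) ?_
  rintro ⟨β, γ⟩ ⟨hβ, hγ⟩ ⟨β', γ'⟩ ⟨hβ', hγ'⟩ h
  have hdiff : β - β' = γ' - γ := by
    rw [sub_eq_sub_iff_add_eq_add, add_comm γ']; exact h
  have hββ' : β - β' = 0 := eq_zero_of_isCoprime hfg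
    (by rw [map_sub, aeval_apply_eq_zero_of_mem hβ, aeval_apply_eq_zero_of_mem hβ', sub_self])
    (by rw [hdiff, map_sub, aeval_apply_eq_zero_of_mem hγ', aeval_apply_eq_zero_of_mem hγ,
      sub_self])
  rw [hββ', eq_comm, sub_eq_zero] at hdiff
  exact Prod.ext (sub_eq_zero.mp hββ') hdiff.symm

end Order

lemma sub_one_pow_le_pow_sub_pow {q M N : ℕ} (hq : 0 < q) (hMN : M < N) :
    (q - 1) ^ N ≤ q ^ N - q ^ M := by
  obtain ⟨N, rfl⟩ := Nat.exists_eq_add_of_lt hMN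
  calc (q - 1) ^ (M + N + 1) ≤ q ^ (M + N) * (q - 1) :=
        pow_succ (q - 1) _ ▸ Nat.mul_le_mul_right _ (Nat.pow_le_pow_left (Nat.sub_le q 1) _)
    _ = q ^ (M + N + 1) - q ^ (M + N) := by rw [Nat.mul_sub, mul_one, pow_succ]
    _ ≤ q ^ (M + N + 1) - q ^ M := Nat.sub_le_sub_left (Nat.pow_le_pow_right hq (by omega)) _

section Count

variable {K V : Type*} [Field K] [AddCommGroup V] [Module K V] [Finite K] [Finite V]
  {φ : Module.End K V}

lemma ncard_elementsOfOrder_ge {m : K[X]} (hm : m ≠ 0)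
    (hker : ∀ f, f ∣ m → finrank K (LinearMap.ker (aeval φ f)) = f.natDegree)
    {f : K[X]} (hf : f ∣ m) :
    (Nat.card K - 1) ^ f.natDegree ≤ (elementsOfOrder φ f).ncard := by
  induction f using UniqueFactorizationMonoid.induction_on_coprime with
  | h0 => exact absurd (zero_dvd_iff.mp hf) hm
  | h1 hu => simp [elementsOfOrder_of_isUnit hu, natDegree_eq_zero_of_isUnit hu]
  | @hpr p i hp =>
    obtain _ | e := i
    · simp [elementsOfOrder_of_isUnit (isUnit_one (M := K[X]))]
    have hcard : ∀ j ≤ e + 1, Nat.card (LinearMap.ker (aeval φ (p ^ j))) =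
        Nat.card K ^ (j * p.natDegree) := fun j hj => by
      rw [natCard_eq_pow_finrank (K := K), hker _ ((pow_dvd_pow p hj).trans hf), natDegree_pow]
    rw [elementsOfOrder_pow_succ hp, Set.ncard_sdiff, ← Nat.card_coe_set_eq,
      ← Nat.card_coe_set_eq, SetLike.coe_sort_coe, SetLike.coe_sort_coe, hcard _ le_rfl,
      hcard _ e.le_succ, natDegree_pow]
    · exact sub_one_pow_le_pow_sub_pow Nat.card_pos
        (Nat.mul_lt_mul_of_pos_right e.lt_succ_self hp.irreducible.natDegree_pos)
    · exact fun v hv => aeval_apply_eq_zero_of_dvd (pow_dvd_pow p e.le_succ) hv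
  | @hcp f g hrel hf' hg' =>
    have hcop := hrel.isCoprime
    calc (Nat.card K - 1) ^ (f * g).natDegree
        = (Nat.card K - 1) ^ f.natDegree * (Nat.card K - 1) ^ g.natDegree := by
          rw [natDegree_mul (left_ne_zero_of_mul (ne_zero_of_dvd_ne_zero hm hf))
            (right_ne_zero_of_mul (ne_zero_of_dvd_ne_zero hm hf)), pow_add]
      _ ≤ (elementsOfOrder φ f).ncard * (elementsOfOrder φ g).ncard :=
          Nat.mul_le_mul (hf' (dvd_of_mul_right_dvd hf)) (hg' (dvd_of_mul_left_dvd hf))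
      _ ≤ (elementsOfOrder φ (f * g)).ncard := ncard_elementsOfOrder_mul_le hcop

end Count

section Dimension

variable {K V : Type*} [Field K] [AddCommGroup V] [Module K V] {φ : Module.End K V}

lemma finrank_ker_aeval_eq_natDegree [FiniteDimensional K V] {m : K[X]} (hm : m ≠ 0)
    (hφm : aeval φ m = 0) (hV : finrank K V = m.natDegree)
    (hle : ∀ f : K[X], f ≠ 0 → finrank K (LinearMap.ker (aeval φ f)) ≤ f.natDegree)
    {f : K[X]} (hf : f ∣ m) : finrank K (LinearMap.ker (aeval φ f)) = f.natDegree := by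
  obtain ⟨g, rfl⟩ := hf
  have hf0 := left_ne_zero_of_mul hm
  have hg0 := right_ne_zero_of_mul hm
  have hrange : LinearMap.range (aeval φ g) ≤ LinearMap.ker (aeval φ f) := by
    rintro _ ⟨v, rfl⟩
    rw [LinearMap.mem_ker, ← Module.End.mul_apply, ← map_mul, hφm, LinearMap.zero_apply]
  have hrank := LinearMap.finrank_range_add_finrank_ker (aeval φ g)
  have := Submodule.finrank_mono hrange
  have := hle g hg0
  refine le_antisymm (hle f hf0) ?_
  rw [hV, natDegree_mul hf0 hg0] at hrank
  omega

lemma finrank_span_pow_apply {h : K[X]} {v : V} (hv : v ∈ elementsOfOrder φ h) :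
    finrank K (Submodule.span K (Set.range fun i : ℕ => (φ ^ i) v)) = h.natDegree := by
  let π : K[X] →ₗ[K] V := LinearMap.applyₗ v ∘ₗ (aeval φ).toLinearMap
  have hker : LinearMap.ker π = (Ideal.span {h}).restrictScalars K := by
    ext c
    simpa [π, Ideal.mem_span_singleton] using hv c
  have hrange : LinearMap.range π = Submodule.span K (Set.range fun i : ℕ => (φ ^ i) v) := by
    rw [LinearMap.range_eq_map, ← (basisMonomials K).span_eq, Submodule.map_span,
      ← Set.range_comp]
    congr 2
    ext i
    simp [π]
  rw [← hrange, ← π.quotKerEquivRange.finrank_eq, hker,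
    (Submodule.Quotient.restrictScalarsEquiv K _).finrank_eq, finrank_quotient_span_eq_natDegree]

end Dimension

lemma X_pow_sub_one_ne_zero {R : Type*} [Ring R] [Nontrivial R] {n : ℕ} (hn : 0 < n) :
    (X : R[X]) ^ n - 1 ≠ 0 := by
  simpa using X_pow_sub_C_ne_zero hn (1 : R)

section Frobenius

variable (K : Type*) {L : Type*} [Field K] [Fintype K] [Field L] [Algebra K L]

lemma frobeniusAlgHom_pow_apply (i : ℕ) (x : L) :
    ((frobeniusAlgHom K L).toLinearMap ^ i) x = x ^ Fintype.card K ^ i := by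
  rw [Module.End.pow_apply, AlgHom.coe_toLinearMap, coe_frobeniusAlgHom, pow_iterate]

variable {K}

/-- The kernel of `f(Frob)` lies in the root set of the `q`-polynomial `Σ aᵢ X^(qⁱ)`. -/
lemma natCard_ker_aeval_frobeniusAlgHom_le [Finite L] {f : K[X]} (hf : f ≠ 0) :
    Nat.card (LinearMap.ker (aeval (frobeniusAlgHom K L).toLinearMap f)) ≤
      Fintype.card K ^ f.natDegree := by
  classical
  have hq : 1 < Fintype.card K := Fintype.one_lt_card
  let P : L[X] := f.sum fun i a => C (algebraMap K L a) * X ^ Fintype.card K ^ i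
  have hP_eval (x : L) : P.eval x = aeval (frobeniusAlgHom K L).toLinearMap f x := by
    simp only [P, aeval_endomorphism, Polynomial.sum, eval_finsetSum, eval_mul, eval_C,
      eval_pow, eval_X, frobeniusAlgHom_pow_apply, Algebra.smul_def]
  have hP_coeff : P.coeff (Fintype.card K ^ f.natDegree) = algebraMap K L f.leadingCoeff := by
    simp only [P, Polynomial.sum]
    rw [finsetSum_coeff, Finset.sum_eq_single f.natDegree]
    · simp [coeff_C_mul, coeff_X_pow]
    · intro i _ hne
      simp [coeff_C_mul, coeff_X_pow, (Nat.pow_right_injective hq).ne hne.symm]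
    · exact fun h => absurd (natDegree_mem_support_of_nonzero hf) h
  have hP0 : P ≠ 0 := fun h => by simp [h, hf, eq_comm (a := (0 : L))] at hP_coeff
  have hP_deg : P.natDegree ≤ Fintype.card K ^ f.natDegree :=
    natDegree_sum_le_of_forall_le _ _ fun i hi => (natDegree_C_mul_le _ _).trans <| by
      rw [natDegree_X_pow]
      exact Nat.pow_le_pow_right (by omega) (le_natDegree_of_mem_supp i hi)
  calc Nat.card (LinearMap.ker (aeval (frobeniusAlgHom K L).toLinearMap f))
      ≤ (P.roots.toFinset : Set L).ncard := by
        rw [← SetLike.coe_sort_coe, Nat.card_coe_set_eq]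
        refine Set.ncard_le_ncard (fun x hx => ?_) (Finset.finite_toSet _)
        simpa [mem_roots hP0, hP_eval] using hx
    _ ≤ Multiset.card P.roots := by
        rw [Set.ncard_coe_finset]; exact Multiset.toFinset_card_le _
    _ ≤ Fintype.card K ^ f.natDegree := (card_roots' P).trans hP_deg

lemma aeval_frobeniusAlgHom_X_pow_finrank_sub_one [Finite L] :
    aeval (frobeniusAlgHom K L).toLinearMap (X ^ finrank K L - 1 : K[X]) = 0 :=
  minpoly_frobeniusAlgHom K L ▸ minpoly.aeval K _

lemma finrank_ker_aeval_frobeniusAlgHom [Finite L] {f : K[X]}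
    (hf : f ∣ X ^ finrank K L - 1) :
    finrank K (LinearMap.ker (aeval (frobeniusAlgHom K L).toLinearMap f)) = f.natDegree := by
  have hn : 0 < finrank K L := finrank_pos (R := K) (M := L)
  refine finrank_ker_aeval_eq_natDegree (X_pow_sub_one_ne_zero hn)
    (aeval_frobeniusAlgHom_X_pow_finrank_sub_one (K := K) (L := L))
    (by simpa using (natDegree_X_pow_sub_C (n := finrank K L) (r := (1 : K))).symm)
    (fun g hg => ?_) hf
  have hcard := natCard_ker_aeval_frobeniusAlgHom_le (L := L) hg
  rw [natCard_eq_pow_finrank (K := K), Nat.card_eq_fintype_card] at hcard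
  exact (Nat.pow_le_pow_iff_right Fintype.one_lt_card).mp hcard

lemma conjSpan_eq_span_range [Finite L] (x : L) :
    conjSpan K (finrank K L) x =
      Submodule.span K (Set.range fun i : ℕ => ((frobeniusAlgHom K L).toLinearMap ^ i) x) := by
  set φ := (frobeniusAlgHom K L).toLinearMap
  set n := finrank K L
  have hφn : φ ^ n = 1 := by
    simpa [sub_eq_zero] using aeval_frobeniusAlgHom_X_pow_finrank_sub_one (K := K) (L := L)
  simp only [conjSpan, ← frobeniusAlgHom_pow_apply]
  refine le_antisymm (Submodule.span_mono (Set.image_subset_range _ _)) (Submodule.span_le.mpr ?_)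
  rintro _ ⟨i, rfl⟩
  have hmod : φ ^ (i % n) = φ ^ i := by
    rw [← Nat.div_add_mod i n, pow_add, pow_mul, hφn, one_pow, one_mul, Nat.div_add_mod]
  exact Submodule.subset_span ⟨i % n, Nat.mod_lt _ (finrank_pos (R := K) (M := L)),
    congr($hmod x)⟩

end Frobenius

theorem stmt_14_general (Fq Fqn : Type*) [Field Fq] [Fintype Fq] [Field Fqn] [Fintype Fqn]
    [Algebra Fq Fqn] (q n : ℕ) (hq : q = Fintype.card Fq)
    (hdeg : Module.finrank Fq Fqn = n) (k : ℕ)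
    (hdvd : ∃ h : Polynomial Fq, h.Monic ∧ h ∣ (X ^ n - 1 : Polynomial Fq) ∧
      h.natDegree = n - k) :
    Nat.card {α : Fqn // Module.finrank Fq (conjSpan Fq n α) = n - k} ≥
      (q - 1) ^ (n - k) := by
  obtain ⟨h, -, hdvd, hh⟩ := hdvd
  subst hq hdeg
  have hcount := ncard_elementsOfOrder_ge (φ := (frobeniusAlgHom Fq Fqn).toLinearMap)
    (X_pow_sub_one_ne_zero finrank_pos) (fun _ hf => finrank_ker_aeval_frobeniusAlgHom hf) hdvd
  have hsub : elementsOfOrder (frobeniusAlgHom Fq Fqn).toLinearMap h ⊆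
      {α | finrank Fq (conjSpan Fq (finrank Fq Fqn) α) = finrank Fq Fqn - k} := fun α hα => by
    rw [Set.mem_ofPred_eq, conjSpan_eq_span_range, finrank_span_pow_apply hα, hh]
  calc (Fintype.card Fq - 1) ^ (finrank Fq Fqn - k) = (Nat.card Fq - 1) ^ h.natDegree := by
        rw [hh, Nat.card_eq_fintype_card]
    _ ≤ (elementsOfOrder (frobeniusAlgHom Fq Fqn).toLinearMap h).ncard := hcount
    _ ≤ _ := Set.ncard_le_ncard hsub
    _ = _ := (Nat.card_coe_set_eq _).symm

/-- Let `F_{qⁿ}/F_q` be an extension of finite fields of degree `n ≥ 1` and `0 ≤ k ≤ n`.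
If `xⁿ - 1` has a monic divisor of degree `n - k` in `F_q[x]`, then the number `N_k` of
`k`-normal elements of `F_{qⁿ}` over `F_q` satisfies `N_k ≥ (q-1)^(n-k)`. -/
theorem stmt_14 (Fq Fqn : Type*) [Field Fq] [Fintype Fq] [Field Fqn] [Fintype Fqn]
    [Algebra Fq Fqn] (q n : ℕ) (hq : q = Fintype.card Fq)
    (hn : 0 < n) (hdeg : Module.finrank Fq Fqn = n) (k : ℕ) (hk : k ≤ n)
    (hdvd : ∃ h : Polynomial Fq, h.Monic ∧ h ∣ (X ^ n - 1 : Polynomial Fq) ∧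
      h.natDegree = n - k) :
    Nat.card {α : Fqn // Module.finrank Fq (conjSpan Fq n α) = n - k} ≥
      (q - 1) ^ (n - k) :=
  stmt_14_general Fq Fqn q n hq hdeg k hdvd
end

section
/- Let q be a prime power and r a prime dividing q−1. Then for every positive integer d and every integer k with 1 ≤ k ≤ r^d − 1, there exists a polynomial f ∈ F_q[x] of degree k that divides x^{r^d} − 1 and satisfies f(1) ≠ 0. -/
/-!
Let `ζ` be a primitive `r`-th root of unity (it exists since `r ∣ q - 1`). Then
`X ^ (m * r) - 1 = ∏_{i < r} (X ^ m - ζ ^ i)`, so `X ^ (r ^ (d + 1)) - 1` is `X ^ (r ^ d) - 1`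
times `r - 1` further factors `X ^ (r ^ d) - ζ ^ i` of degree `r ^ d`, none vanishing at `1`.
Writing `k` in base `r`, a factor of degree `k` is built digit by digit: by induction on `d`,
multiply a divisor of `X ^ (r ^ d) - 1` of degree `k % r ^ d` by `k / r ^ d` of the new factors.
-/

open Polynomial Finset

namespace Polynomial

variable {R : Type*} [CommRing R] [IsDomain R] {r : ℕ} {ζ : R}

theorem X_pow_mul_sub_one_eq_prod (hζ : IsPrimitiveRoot ζ r) (hr : 0 < r) (m : ℕ) :
    (X ^ (m * r) - 1 : R[X]) = ∏ i ∈ range r, (X ^ m - C (ζ ^ i)) := by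
  have h := congrArg (fun p : R[X] => p.comp (X ^ m)) (X_pow_sub_C_eq_prod hζ hr (one_pow r))
  simpa [pow_mul, Polynomial.prod_comp] using h

theorem X_pow_sub_one_mul_prod_dvd (hζ : IsPrimitiveRoot ζ r) {a : ℕ} (ha : a < r) (m : ℕ) :
    (X ^ m - 1) * ∏ i ∈ Icc 1 a, (X ^ m - C (ζ ^ i)) ∣ (X ^ (m * r) - 1 : R[X]) := by
  have hr : 0 < r := by omega
  rw [X_pow_mul_sub_one_eq_prod hζ hr, ← mul_prod_erase _ _ (mem_range.2 hr), pow_zero, map_one]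
  refine mul_dvd_mul_left _ (prod_dvd_prod_of_subset _ _ _ fun i hi => ?_)
  simp only [mem_Icc, mem_erase, mem_range] at hi ⊢
  omega

theorem natDegree_prod_X_pow_sub_C {ι : Type*} (s : Finset ι) (c : ι → R) {m : ℕ}
    (hm : 0 < m) :
    (∏ i ∈ s, (X ^ m - C (c i))).natDegree = #s * m := by
  rw [natDegree_prod_of_monic _ _ fun i _ => monic_X_pow_sub_C _ hm.ne']
  simp

theorem eval_one_prod_X_pow_sub_C_ne_zero (hζ : IsPrimitiveRoot ζ r) {a : ℕ} (ha : a < r)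
    (m : ℕ) : (∏ i ∈ Icc 1 a, (X ^ m - C (ζ ^ i))).eval 1 ≠ 0 := by
  rw [eval_prod, prod_ne_zero_iff]
  intro i hi
  rw [mem_Icc] at hi
  simpa [sub_eq_zero, eq_comm (a := (1 : R))] using
    hζ.pow_ne_one_of_pos_of_lt (l := i) (by omega) (by omega)

theorem exists_natDegree_eq_dvd_X_pow_sub_one (hζ : IsPrimitiveRoot ζ r) (hr : 0 < r) (d : ℕ)
    {k : ℕ} (hk : k < r ^ d) :
    ∃ f : R[X], f.natDegree = k ∧ f ∣ X ^ (r ^ d) - 1 ∧ f.eval 1 ≠ 0 := by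
  induction d generalizing k with
  | zero => exact ⟨1, by simp_all, one_dvd _, by simp⟩
  | succ d ih =>
    have hrd : 0 < r ^ d := pow_pos hr d
    obtain ⟨g, hg_deg, hg_dvd, hg_eval⟩ := ih (Nat.mod_lt k hrd)
    have ha : k / r ^ d < r := Nat.div_lt_of_lt_mul (by rwa [← pow_succ])
    have hg : g ≠ 0 := by rintro rfl; simp at hg_eval
    have hprod : (∏ i ∈ Icc 1 (k / r ^ d), (X ^ r ^ d - C (ζ ^ i))) ≠ 0 :=
      (monic_prod_of_monic _ _ fun i _ => monic_X_pow_sub_C _ hrd.ne').ne_zero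
    refine ⟨g * ∏ i ∈ Icc 1 (k / r ^ d), (X ^ r ^ d - C (ζ ^ i)), ?_, ?_, ?_⟩
    · rw [natDegree_mul hg hprod, natDegree_prod_X_pow_sub_C _ _ hrd, hg_deg, Nat.card_Icc,
        Nat.add_sub_cancel]
      exact Nat.mod_add_div' k (r ^ d)
    · rw [pow_succ]
      exact (mul_dvd_mul_right hg_dvd _).trans (X_pow_sub_one_mul_prod_dvd hζ ha _)
    · rw [eval_mul]
      exact mul_ne_zero hg_eval (eval_one_prod_X_pow_sub_C_ne_zero hζ ha _)

end Polynomial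

theorem stmt_15_general (Fq : Type*) [Field Fq] [Fintype Fq] (r : ℕ) (hr : r.Prime)
    (hrq : r ∣ Fintype.card Fq - 1) (d k : ℕ)
    (hk2 : k ≤ r ^ d - 1) :
    ∃ f : Polynomial Fq, f.natDegree = k ∧ f ∣ (X ^ (r ^ d) - 1 : Polynomial Fq) ∧
      f.eval 1 ≠ 0 := by
  classical
  have : Fact r.Prime := ⟨hr⟩
  obtain ⟨x, hx⟩ := exists_prime_orderOf_dvd_card (G := Fqˣ) r (by rwa [Fintype.card_units])
  have hζ : IsPrimitiveRoot (x : Fq) r := by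
    simpa [orderOf_units, hx] using IsPrimitiveRoot.orderOf (x : Fq)
  have hrd : 0 < r ^ d := pow_pos hr.pos d
  exact exists_natDegree_eq_dvd_X_pow_sub_one hζ hr.pos d (by omega)

/-- Let `F_q` be a finite field and `r` a prime dividing `q - 1`.  Then for every
positive integer `d` and every `1 ≤ k ≤ r^d - 1`, there exists a polynomial
`f ∈ F_q[x]` of degree `k` that divides `x^(r^d) - 1` and satisfies `f(1) ≠ 0`. -/
theorem stmt_15 (Fq : Type*) [Field Fq] [Fintype Fq] (r : ℕ) (hr : r.Prime)
    (hrq : r ∣ Fintype.card Fq - 1) (d k : ℕ) (hd : 0 < d)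
    (hk1 : 1 ≤ k) (hk2 : k ≤ r ^ d - 1) :
    ∃ f : Polynomial Fq, f.natDegree = k ∧ f ∣ (X ^ (r ^ d) - 1 : Polynomial Fq) ∧
      f.eval 1 ≠ 0 :=
  stmt_15_general Fq r hr hrq d k hk2
end

section
/- Let n be a prime number and q a prime power not divisible by n such that q is a primitive root modulo n (i.e., the multiplicative order of q modulo n is n−1). Then for every integer k with 1 < k < n−1, there is no k-normal element of F_{q^n} over F_q. -/
open Polynomial

/-!
The Frobenius `φ : x ↦ x ^ q` is an `F_q`-linear endomorphism of `F_{qⁿ}` with minimal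
polynomial `Xⁿ - 1 = Φₙ · (X - 1)`, and the span of the conjugates of `α` is the cyclic
subspace `W` of `α` under `φ`. The minimal polynomial of `φ` restricted to `W` divides
`Φₙ · (X - 1)`, and `Φₙ` is irreducible over `F_q` because the order of `q` modulo `n` is
`n - 1 = deg Φₙ`. So either `Φₙ` divides it, and Cayley–Hamilton gives `dim W ≥ n - 1`, or it
divides `X - 1`, so `φ` fixes `α` and `dim W ≤ 1`.
-/

open Module

namespace Module.End

variable {K V : Type*} [Field K] [AddCommGroup V] [Module K V]

def cyclicSubspace (f : End K V) (v : V) : Submodule K V :=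
  Submodule.span K (Set.range fun i : ℕ => (f ^ i) v)

theorem apply_mem_cyclicSubspace (f : End K V) (v : V) :
    ∀ w ∈ f.cyclicSubspace v, f w ∈ f.cyclicSubspace v := by
  have : f.cyclicSubspace v ≤ (f.cyclicSubspace v).comap f :=
    Submodule.span_le.mpr <| by
      rintro _ ⟨i, rfl⟩
      exact Submodule.subset_span ⟨i + 1, by simp only [pow_succ', mul_apply]⟩
  exact fun w hw => this hw

theorem aeval_restrict_apply (f : End K V) {W : Submodule K V} (hW : ∀ w ∈ W, f w ∈ W)
    (P : K[X]) (w : W) : (aeval (f.restrict hW) P w : V) = aeval f P w := by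
  induction P using Polynomial.induction_on' with
  | add P Q hP hQ => simp [hP, hQ]
  | monomial k a => simp [pow_restrict k hW]

theorem finrank_cyclicSubspace_le_one_or [FiniteDimensional K V] (f : End K V) (v : V)
    {P : K[X]} (hP : Irreducible P) (hf : aeval f (P * (X - 1)) = 0) :
    finrank K (f.cyclicSubspace v) ≤ 1 ∨ P.natDegree ≤ finrank K (f.cyclicSubspace v) := by
  set g := f.restrict (apply_mem_cyclicSubspace f v)
  have hdvd : minpoly K g ∣ P * (X - 1) := minpoly.dvd _ _ <| LinearMap.ext fun w =>
    Subtype.ext <| by rw [aeval_restrict_apply, hf]; rfl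
  by_cases hPg : P ∣ minpoly K g
  · right
    calc P.natDegree ≤ (minpoly K g).natDegree :=
          natDegree_le_of_dvd hPg (minpoly.ne_zero (Algebra.IsIntegral.isIntegral g))
      _ ≤ g.charpoly.natDegree :=
          natDegree_le_of_dvd (LinearMap.minpoly_dvd_charpoly g) g.charpoly_monic.ne_zero
      _ = finrank K (f.cyclicSubspace v) := g.charpoly_natDegree
  · left
    have hg : g = 1 := by
      simpa [sub_eq_zero] using minpoly.dvd_iff.mp
        ((hP.coprime_iff_not_dvd.mpr hPg).symm.dvd_of_dvd_mul_left hdvd)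
    have hv : f v = v := congr(($hg ⟨v, Submodule.subset_span ⟨0, rfl⟩⟩ : V))
    have hpow : ∀ i : ℕ, (f ^ i) v = v := fun i => by
      induction i with
      | zero => rfl
      | succ i ih => rw [pow_succ', mul_apply, ih, hv]
    calc finrank K (f.cyclicSubspace v) = finrank K (K ∙ v) := by
          rw [show f.cyclicSubspace v = K ∙ v by
            simp only [cyclicSubspace, hpow, Set.range_const]]
      _ ≤ 1 := (finrank_span_le_card {v}).trans (by simp)

end Module.End

theorem irreducible_cyclotomic_of_orderOf_eq_totient {K : Type*} [Field K] [Fintype K] {n : ℕ}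
    (hn : (Fintype.card K).Coprime n) (h : orderOf (Fintype.card K : ZMod n) = n.totient) :
    Irreducible (cyclotomic n K) := by
  obtain ⟨p, _⟩ := CharP.exists K
  obtain ⟨f, hp, hK⟩ := FiniteField.card K p
  have := Fact.mk hp
  have hpn : p.Coprime n := Nat.Coprime.coprime_dvd_left (dvd_pow_self p f.ne_zero) (hK ▸ hn)
  refine irreducible_of_dvd_cyclotomic_of_natDegree hK hpn dvd_rfl ?_
  rw [natDegree_cyclotomic, ← h, ← orderOf_units, ZMod.coe_unitOfCoprime, hK, Nat.cast_pow]

namespace FiniteField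

variable (K L : Type*) [Field K] [Fintype K]

theorem frobeniusAlgHom_toLinearMap_pow_apply_s17 [CommRing L] [Algebra K L] (i : ℕ) (x : L) :
    ((frobeniusAlgHom K L).toLinearMap ^ i) x = x ^ Fintype.card K ^ i := by
  rw [Module.End.pow_apply, AlgHom.coe_toLinearMap, coe_frobeniusAlgHom, pow_iterate]

variable [Field L] [Algebra K L] [Finite L]

theorem pow_card_pow_mod_finrank (x : L) (i : ℕ) :
    x ^ Fintype.card K ^ (i % finrank K L) = x ^ Fintype.card K ^ i := by
  have h := congr($(pow_mod_orderOf (frobeniusAlgHom K L) i) x)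
  rwa [orderOf_frobeniusAlgHom, AlgHom.coe_pow, AlgHom.coe_pow, coe_frobeniusAlgHom, pow_iterate,
    pow_iterate] at h

theorem conjSpan_finrank_eq_cyclicSubspace (x : L) :
    conjSpan K (finrank K L) x = Module.End.cyclicSubspace (frobeniusAlgHom K L).toLinearMap x := by
  simp only [conjSpan, Module.End.cyclicSubspace, frobeniusAlgHom_toLinearMap_pow_apply_s17]
  refine le_antisymm (Submodule.span_mono (Set.image_subset_range _ _)) (Submodule.span_le.mpr ?_)
  rintro _ ⟨i, rfl⟩
  exact Submodule.subset_span
    ⟨i % finrank K L, Nat.mod_lt i finrank_pos, pow_card_pow_mod_finrank K L x i⟩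

end FiniteField

theorem stmt_17_general (Fq Fqn : Type*) [Field Fq] [Fintype Fq] [Field Fqn]
    [Algebra Fq Fqn] (q n : ℕ) (hq : q = Fintype.card Fq)
    (hn : n.Prime) (hdeg : Module.finrank Fq Fqn = n)
    (hndvd : ¬ n ∣ q) (hprim : orderOf (q : ZMod n) = n - 1)
    (k : ℕ) (hk1 : 1 < k) (hk2 : k < n - 1) :
    ¬ ∃ α : Fqn, Module.finrank Fq (conjSpan Fq n α) = n - k := by
  subst hq
  rintro ⟨α, hα⟩
  have := Fact.mk hn
  have : FiniteDimensional Fq Fqn := Module.finite_of_finrank_pos (hdeg ▸ hn.pos)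
  have : Finite Fqn := Module.finite_of_finite Fq
  have hirr : Irreducible (cyclotomic n Fq) :=
    irreducible_cyclotomic_of_orderOf_eq_totient ((hn.coprime_iff_not_dvd.mpr hndvd).symm)
      (by rwa [Nat.totient_prime hn])
  have hann : aeval (FiniteField.frobeniusAlgHom Fq Fqn).toLinearMap
      (cyclotomic n Fq * (X - 1)) = 0 := by
    rw [cyclotomic_prime_mul_X_sub_one, ← hdeg, ← FiniteField.minpoly_frobeniusAlgHom,
      minpoly.aeval]
  have hle := Submodule.finrank_le (conjSpan Fq n α)
  rw [← hdeg, FiniteField.conjSpan_finrank_eq_cyclicSubspace] at hα hle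
  rcases Module.End.finrank_cyclicSubspace_le_one_or _ α hirr hann with h | h
  · omega
  · rw [natDegree_cyclotomic, Nat.totient_prime hn] at h
    omega

/-- Let `n` be a prime number, and let `q` be a prime power not divisible by `n` that is
a primitive root modulo `n` (the multiplicative order of `q` mod `n` is `n - 1`).  Then,
for every `1 < k < n - 1`, there is no `k`-normal element of `F_{qⁿ}` over `F_q`. -/
theorem stmt_17 (Fq Fqn : Type*) [Field Fq] [Fintype Fq] [Field Fqn] [Fintype Fqn]
    [Algebra Fq Fqn] (q n : ℕ) (hq : q = Fintype.card Fq)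
    (hn : n.Prime) (hdeg : Module.finrank Fq Fqn = n)
    (hndvd : ¬ n ∣ q) (hprim : orderOf (q : ZMod n) = n - 1)
    (k : ℕ) (hk1 : 1 < k) (hk2 : k < n - 1) :
    ¬ ∃ α : Fqn, Module.finrank Fq (conjSpan Fq n α) = n - k :=
  stmt_17_general Fq Fqn q n hq hn hdeg hndvd hprim k hk1 hk2
end

section
/- Let q be a prime power and n a positive integer dividing q−1. Then for every integer k with 0 ≤ k ≤ n, the number of k-normal elements of F_{q^n} over F_q equals C(n,k) · (q−1)^{n−k}, where C(n,k) denotes the binomial coefficient. -/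
open Polynomial Finset Module

section Eigenbasis

variable {K V ι : Type*} [Field K] [AddCommGroup V] [Module K V] [Fintype ι]
  {f : Module.End K V} {b : Basis ι K V} {μ : ι → K}

theorem Module.End.aeval_apply_of_eigenbasis (hf : ∀ i, f (b i) = μ i • b i) (p : K[X]) (v : V) :
    aeval f p v = ∑ i, (b.repr v i * p.eval (μ i)) • b i := by
  conv_lhs => rw [← b.sum_repr v]
  simp only [map_sum, map_smul, mul_smul]
  refine sum_congr rfl fun i _ => ?_
  rw [aeval_apply_of_hasEigenvector
    (hasEigenvector_iff.2 ⟨mem_eigenspace_iff.2 (hf i), b.ne_zero i⟩)]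

theorem Module.End.span_pow_apply_eq_span_repr_support (hf : ∀ i, f (b i) = μ i • b i)
    (hμ : Function.Injective μ) (v : V) :
    Submodule.span K ((fun j => (f ^ j) v) '' Set.Iio (Fintype.card ι)) =
      Submodule.span K (b '' {i | b.repr v i ≠ 0}) := by
  classical
  apply le_antisymm
  · rw [Submodule.span_le]
    rintro _ ⟨j, -, rfl⟩
    have hpow : (f ^ j) v = ∑ i, (b.repr v i * μ i ^ j) • b i := by
      simpa only [map_pow, aeval_X, eval_pow, eval_X] using aeval_apply_of_eigenbasis hf (X ^ j) v
    show (f ^ j) v ∈ _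
    rw [hpow]
    refine Submodule.sum_mem _ fun i _ => ?_
    by_cases hi : b.repr v i = 0
    · simp [hi]
    · exact Submodule.smul_mem _ _ (Submodule.subset_span ⟨i, hi, rfl⟩)
  · rw [Submodule.span_le]
    rintro _ ⟨i, hi, rfl⟩
    -- the Lagrange polynomial with `p (μ j) = δᵢⱼ` has degree `< #ι` and isolates coordinate `i`
    set p := Lagrange.basis univ μ i
    have hp : aeval f p v = b.repr v i • b i := by
      rw [aeval_apply_of_eigenbasis hf, sum_eq_single i]
      · rw [Lagrange.eval_basis_self hμ.injOn (mem_univ i), mul_one]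
      · intro j _ hj
        rw [Lagrange.eval_basis_of_ne hj.symm (mem_univ j), mul_zero, zero_smul]
      · simp
    have hdeg : p.natDegree < Fintype.card ι := by
      rw [Lagrange.natDegree_basis hμ.injOn (mem_univ i), card_univ]
      exact Nat.sub_lt (Fintype.card_pos_iff.2 ⟨i⟩) one_pos
    have hmem :
        aeval f p v ∈ Submodule.span K ((fun j => (f ^ j) v) '' Set.Iio (Fintype.card ι)) := by
      rw [aeval_eq_sum_range' hdeg, LinearMap.sum_apply]
      exact Submodule.sum_mem _ fun j hj => Submodule.smul_mem _ _
        (Submodule.subset_span ⟨j, Set.mem_Iio.2 (mem_range.1 hj), rfl⟩)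
    rw [SetLike.mem_coe, ← inv_smul_smul₀ hi (b i), ← hp]
    exact Submodule.smul_mem _ _ hmem

theorem Module.End.finrank_span_pow_apply_eq_hammingNorm [DecidableEq K]
    (hf : ∀ i, f (b i) = μ i • b i) (hμ : Function.Injective μ) (v : V) :
    finrank K (Submodule.span K ((fun j => (f ^ j) v) '' Set.Iio (Fintype.card ι))) =
      hammingNorm (b.repr v) := by
  rw [span_pow_apply_eq_span_repr_support hf hμ, Set.image_eq_range]
  exact (finrank_span_eq_card (b.linearIndependent.comp _ Subtype.val_injective)).trans
    (Fintype.card_subtype _)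

end Eigenbasis

theorem card_hammingNorm_eq {ι R : Type*} [Fintype ι] [DecidableEq ι] [Fintype R] [Zero R]
    [DecidableEq R] (m : ℕ) :
    #{c : ι → R | hammingNorm c = m} = (Fintype.card ι).choose m * (Fintype.card R - 1) ^ m := by
  have hfiber (S : Finset ι) :
      #{c : ι → R | ({i | c i ≠ 0} : Finset ι) = S} = (Fintype.card R - 1) ^ #S := by
    have hS (c : ι → R) : ({i | c i ≠ 0} : Finset ι) = S ↔ ∀ i, (c i ≠ 0 ↔ i ∈ S) := by
      simp [Finset.ext_iff]
    simp_rw [hS, ← Fintype.card_subtype]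
    have hcoord (i : ι) :
        Fintype.card {r : R // r ≠ 0 ↔ i ∈ S} = if i ∈ S then Fintype.card R - 1 else 1 := by
      split_ifs with hi <;> simp [hi, Fintype.card_subtype_compl]
    rw [Fintype.card_congr (Equiv.subtypePiEquivPi (p := fun i r => (r ≠ 0 ↔ i ∈ S))),
      Fintype.card_pi, prod_congr rfl fun i _ => hcoord i, prod_ite_mem, univ_inter, prod_const]
  calc #{c : ι → R | hammingNorm c = m}
      = ∑ S ∈ powersetCard m univ, #{c : ι → R | ({i | c i ≠ 0} : Finset ι) = S} := by
        rw [card_eq_sum_card_fiberwise (f := fun c : ι → R => ({i | c i ≠ 0} : Finset ι))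
          (t := powersetCard m univ)]
        · refine sum_congr rfl fun S hS => ?_
          rw [filter_filter]
          refine congrArg card (filter_congr fun c _ => and_iff_right_of_imp fun hc => ?_)
          rw [← (mem_powersetCard_univ.1 hS), ← hc]
          rfl
        · intro c hc
          simpa [mem_powersetCard_univ, hammingNorm] using hc
    _ = (Fintype.card ι).choose m * (Fintype.card R - 1) ^ m := by
        rw [sum_congr rfl fun S hS => by rw [hfiber, (mem_powersetCard_univ.1 hS)], sum_const,
          card_powersetCard, card_univ, smul_eq_mul]

theorem IsCyclic.exists_pow_eq_of_pow_eq_one {G : Type*} [CommGroup G] [IsCyclic G] [Finite G]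
    {d m : ℕ} (hG : Nat.card G = d * m) {z : G} (hz : z ^ m = 1) : ∃ y, y ^ d = z := by
  have hd : d ∣ Nat.card G := hG ▸ dvd_mul_right d m
  have hm : m ∣ Nat.card G := hG ▸ dvd_mul_left m d
  have hle : (powMonoidHom d : G →* G).range ≤ (powMonoidHom m).ker := by
    rintro _ ⟨y, rfl⟩
    rw [MonoidHom.mem_ker, powMonoidHom_apply, powMonoidHom_apply, ← pow_mul, ← hG,
      pow_card_eq_one']
  have hcard :
      Nat.card (powMonoidHom m : G →* G).ker ≤ Nat.card (powMonoidHom d : G →* G).range := by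
    rw [card_powMonoidHom_range, card_powMonoidHom_ker, Nat.gcd_eq_right hd, Nat.gcd_eq_right hm,
      hG, Nat.mul_div_cancel_left m (Nat.pos_of_mul_pos_right (hG ▸ Nat.card_pos))]
  obtain ⟨y, hy⟩ : z ∈ (powMonoidHom d : G →* G).range := by
    rw [Subgroup.eq_of_le_of_card_ge hle hcard]
    exact hz
  exact ⟨y, hy⟩

namespace FiniteField

variable {Fq Fqn : Type*} [Field Fq] [Fintype Fq] [Field Fqn] [Algebra Fq Fqn]

theorem frobeniusAlgHom_toLinearMap_pow_apply_s19 (j : ℕ) (x : Fqn) :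
    ((frobeniusAlgHom Fq Fqn).toLinearMap ^ j) x = x ^ Fintype.card Fq ^ j := by
  rw [Module.End.pow_apply, AlgHom.coe_toLinearMap, coe_frobeniusAlgHom, pow_iterate]

theorem conjSpan_eq_span_frobenius_pow (n : ℕ) (α : Fqn) :
    conjSpan Fq n α =
      Submodule.span Fq ((fun j => ((frobeniusAlgHom Fq Fqn).toLinearMap ^ j) α) '' Set.Iio n) := by
  simp only [conjSpan, frobeniusAlgHom_toLinearMap_pow_apply_s19]

variable [Finite Fqn]

theorem exists_pow_card_sub_one_eq_algebraMap {ζ : Fqˣ} (hζ : ζ ^ finrank Fq Fqn = 1) :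
    ∃ β : Fqnˣ, β ^ (Fintype.card Fq - 1) = Units.map (algebraMap Fq Fqn) ζ := by
  set q := Fintype.card Fq
  have hcard : Nat.card Fqnˣ = (q - 1) * ∑ i ∈ range (finrank Fq Fqn), q ^ i := by
    rw [Nat.card_units, Module.natCard_eq_pow_finrank (K := Fq), Nat.card_eq_fintype_card,
      mul_comm, geom_sum_mul_of_one_le Fintype.card_pos]
  -- `ζ ^ (1 + q + ⋯ + q ^ (n - 1)) = ζ ^ n` because `ζ ^ q = ζ`
  have hnorm : ζ ^ ∑ i ∈ range (finrank Fq Fqn), q ^ i = 1 := by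
    rw [← prod_pow_eq_pow_sum, prod_congr rfl fun i _ => Units.ext (pow_card_pow i (ζ : Fq)),
      prod_const, card_range, hζ]
  exact IsCyclic.exists_pow_eq_of_pow_eq_one hcard (by rw [← map_pow, hnorm, map_one])

theorem exists_frobenius_eigenbasis (hdvd : finrank Fq Fqn ∣ Fintype.card Fq - 1) :
    ∃ (μ : Fin (finrank Fq Fqn) → Fq) (b : Basis (Fin (finrank Fq Fqn)) Fq Fqn),
      Function.Injective μ ∧ ∀ i, frobeniusAlgHom Fq Fqn (b i) = μ i • b i := by
  set n := finrank Fq Fqn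
  obtain ⟨ζ, hζ⟩ : ∃ ζ : Fqˣ, orderOf ζ = n := by
    obtain ⟨g, hg⟩ := IsCyclic.exists_ofOrder_eq_natCard (α := Fqˣ)
    have hdvd' : n ∣ orderOf g := by rwa [hg, Nat.card_units, Nat.card_eq_fintype_card]
    exact ⟨g ^ (orderOf g / n), orderOf_pow_orderOf_div (hg ▸ Nat.card_pos.ne') hdvd'⟩
  obtain ⟨β, hβ⟩ := exists_pow_card_sub_one_eq_algebraMap (hζ ▸ pow_orderOf_eq_one ζ)
  have hβq : (β : Fqn) ^ Fintype.card Fq = algebraMap Fq Fqn ζ * β := by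
    rw [← Nat.sub_add_cancel Fintype.card_pos, pow_succ, ← Units.val_pow_eq_pow_val, hβ]
    rfl
  set μ : Fin n → Fq := fun i => (ζ : Fq) ^ (i : ℕ)
  set v : Fin n → Fqn := fun i => (β : Fqn) ^ (i : ℕ)
  have hμ : Function.Injective μ := fun i j hij =>
    Fin.ext (pow_injOn_Iio_orderOf (by rw [orderOf_units, hζ]; exact i.2)
      (by rw [orderOf_units, hζ]; exact j.2) hij)
  have hv (i : Fin n) : frobeniusAlgHom Fq Fqn (v i) = μ i • v i := by
    change ((β : Fqn) ^ (i : ℕ)) ^ Fintype.card Fq = _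
    rw [Algebra.smul_def, ← pow_mul, mul_comm, pow_mul, hβq, mul_pow, map_pow]
  have hind : LinearIndependent Fq v :=
    Module.End.eigenvectors_linearIndependent' (frobeniusAlgHom Fq Fqn).toLinearMap μ hμ v fun i =>
      Module.End.hasEigenvector_iff.2
        ⟨Module.End.mem_eigenspace_iff.2 (hv i), pow_ne_zero _ β.ne_zero⟩
  have : Nonempty (Fin n) := ⟨⟨0, finrank_pos⟩⟩
  exact ⟨μ, basisOfLinearIndependentOfCardEqFinrank hind (Fintype.card_fin n), hμ, by
    simpa only [coe_basisOfLinearIndependentOfCardEqFinrank] using hv⟩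

end FiniteField

theorem stmt_19_general (Fq Fqn : Type*) [Field Fq] [Fintype Fq] [Field Fqn] [Fintype Fqn]
    [Algebra Fq Fqn] (q n : ℕ) (hq : q = Fintype.card Fq)
    (hndvd : n ∣ q - 1) (hdeg : Module.finrank Fq Fqn = n) :
    ∀ k : ℕ, k ≤ n →
      Nat.card {α : Fqn // Module.finrank Fq (conjSpan Fq n α) = n - k} =
        n.choose k * (q - 1) ^ (n - k) := by
  classical
  intro k hk
  subst hq hdeg
  obtain ⟨μ, b, hμ, hb⟩ := FiniteField.exists_frobenius_eigenbasis hndvd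
  have hrank (α : Fqn) : finrank Fq (conjSpan Fq (finrank Fq Fqn) α) = hammingNorm (b.repr α) := by
    have := Module.End.finrank_span_pow_apply_eq_hammingNorm
      (f := (FiniteField.frobeniusAlgHom Fq Fqn).toLinearMap) hb hμ α
    rwa [Fintype.card_fin, ← FiniteField.conjSpan_eq_span_frobenius_pow] at this
  calc Nat.card {α : Fqn // finrank Fq (conjSpan Fq (finrank Fq Fqn) α) = finrank Fq Fqn - k}
      = Nat.card {c : Fin (finrank Fq Fqn) → Fq // hammingNorm c = finrank Fq Fqn - k} :=
        Nat.card_congr (b.equivFun.toEquiv.subtypeEquiv fun α => by rw [hrank]; rfl)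
    _ = (finrank Fq Fqn).choose k * (Fintype.card Fq - 1) ^ (finrank Fq Fqn - k) := by
        rw [Nat.card_eq_fintype_card, Fintype.card_subtype, card_hammingNorm_eq, Fintype.card_fin,
          Nat.choose_symm hk]

/-- Let `F_{qⁿ}/F_q` be an extension of finite fields where `n` divides `q - 1`.  Then,
for every `0 ≤ k ≤ n`, the number of `k`-normal elements of `F_{qⁿ}` over `F_q` equals
`C(n,k)·(q-1)^(n-k)`. -/
theorem stmt_19 (Fq Fqn : Type*) [Field Fq] [Fintype Fq] [Field Fqn] [Fintype Fqn]
    [Algebra Fq Fqn] (q n : ℕ) (hq : q = Fintype.card Fq) (hn : 0 < n)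
    (hndvd : n ∣ q - 1) (hdeg : Module.finrank Fq Fqn = n) :
    ∀ k : ℕ, k ≤ n →
      Nat.card {α : Fqn // Module.finrank Fq (conjSpan Fq n α) = n - k} =
        n.choose k * (q - 1) ^ (n - k) :=
  stmt_19_general Fq Fqn q n hq hndvd hdeg
end
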